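/- Let H ∈ (1/4, 1/2) and set c₁ := Γ(2H+1) sin(πH)/(2π). Then for all real numbers 0 ≤ s ≤ t: c₁ ∫_0^s ∫_ℝ (e^{−(t−r)ξ²} − e^{−(s−r)ξ²})² |ξ|^{1−2H} dξ dr + c₁ ∫_s^t ∫_ℝ e^{−2(t−r)ξ²} |ξ|^{1−2H} dξ dr + (Γ(1+2H) sin(πH)/(4π)) ∫_ℝ (e^{−sξ²} − e^{−tξ²})² |ξ|^{−1−2H} dξ = (Γ(2H)/Γ(H)) · (t − s)^H. -/

import Mathlib

/-!
Every ξ-integral reduces to the Gaussian moment `∫ e^{-uξ²} |ξ|^{1-2H} dξ = Γ(1-H) u^{H-1}`: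
squares of differences of exponentials are expanded into single exponentials, and against
the weight `|ξ|^{-1-2H}`, which is not integrable at 0, one writes
`e^{-aξ²} - e^{-bξ²} = ξ² ∫_a^b e^{-uξ²} du` and applies Fubini. The remaining `r`-integrals
of powers `(k - 2r)^{H-1}` are elementary, and after summation everything cancels except
`(t-s)^H`, with the constant `Γ(2H+1) sin(πH) Γ(1-H) / (2πH)`, which equals `Γ(2H)/Γ(H)` by
the reflection formula.
-/

open MeasureTheory Real Set Function

lemma integrable_comp_abs_of_integrableOn_Ioi {E : Type*} [NormedAddCommGroup E] {f : ℝ → E}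
    (hf : IntegrableOn f (Ioi 0)) : Integrable fun x => f |x| := by
  have hIoi : IntegrableOn (fun x => f |x|) (Ioi 0) :=
    hf.congr_fun (fun x hx => by rw [abs_of_pos hx]) measurableSet_Ioi
  have hIic : IntegrableOn (fun x => f |x|) (Iic 0) := by
    have hneg : MeasurableEmbedding fun x : ℝ => -x := (Homeomorph.neg ℝ).measurableEmbedding
    rw [← Measure.map_neg_eq_self (volume : Measure ℝ), hneg.integrableOn_map_iff]
    simp_rw [comp_def, abs_neg, neg_preimage, neg_Iic, neg_zero]
    exact Iff.mpr integrableOn_Ici_iff_integrableOn_Ioi hIoi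
  rw [← integrableOn_univ, ← Iic_union_Ioi (a := (0 : ℝ))]
  exact hIic.union hIoi

lemma integrable_exp_neg_mul_sq_mul_abs_rpow {u p : ℝ} (hu : 0 < u) (hp : -1 < p) :
    Integrable fun ξ : ℝ => exp (-u * ξ ^ 2) * |ξ| ^ p := by
  simpa only [sq_abs, mul_comm] using
    integrable_comp_abs_of_integrableOn_Ioi (integrableOn_rpow_mul_exp_neg_mul_sq hu hp)

lemma integral_exp_neg_mul_sq_mul_abs_rpow {u p : ℝ} (hu : 0 < u) (hp : -1 < p) :
    ∫ ξ : ℝ, exp (-u * ξ ^ 2) * |ξ| ^ p = Gamma ((p + 1) / 2) * u ^ (-(p + 1) / 2) := by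
  have hGamma := integral_rpow_mul_exp_neg_mul_rpow two_pos hp hu
  simp only [rpow_two] at hGamma
  have habs := integral_comp_abs (f := fun x : ℝ => x ^ p * exp (-u * x ^ 2))
  simp only [sq_abs] at habs
  rw [integral_congr_ae (.of_forall fun ξ => mul_comm _ _), habs, hGamma]
  ring

lemma integrableOn_Ioo_sub_mul_rpow {r : ℝ} (hr : -1 < r) {c : ℝ} (hc : c ≠ 0) (k : ℝ)
    {l u : ℝ} (hlu : l ≤ u) : IntegrableOn (fun x : ℝ => (k - c * x) ^ r) (Ioo l u) := by
  have h := ((intervalIntegral.intervalIntegrable_rpow' hr (a := k - c * l)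
    (b := k - c * u)).comp_sub_left k).comp_mul_left (c := c)
  simp only [sub_sub_cancel, mul_div_cancel_left₀ _ hc] at h
  exact (intervalIntegrable_iff_integrableOn_Ioo_of_le hlu).1 h

lemma integral_Ioo_sub_mul_rpow {H : ℝ} (hH : 0 < H) {c : ℝ} (hc : c ≠ 0) (k : ℝ)
    {l u : ℝ} (hlu : l ≤ u) :
    ∫ r in Ioo l u, (k - c * r) ^ (H - 1)
      = ((k - c * l) ^ H - (k - c * u) ^ H) / (c * H) := by
  rw [← integral_Ioc_eq_integral_Ioo, ← intervalIntegral.integral_of_le hlu,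
    intervalIntegral.integral_comp_sub_mul (fun x => x ^ (H - 1)) hc,
    integral_rpow (Or.inl (by linarith)), sub_add_cancel, smul_eq_mul]
  field_simp

lemma sq_exp_neg_mul_sub_exp_neg_mul (a b x : ℝ) :
    (exp (-a * x) - exp (-b * x)) ^ 2
      = exp (-(2 * a) * x) - 2 * exp (-(a + b) * x) + exp (-(2 * b) * x) := by
  simp only [two_mul, neg_add, add_mul, exp_add]
  ring

lemma mul_integral_Ioo_exp_neg_mul (c : ℝ) {a b : ℝ} (hab : a ≤ b) :
    c * ∫ u in Ioo a b, exp (-u * c) = exp (-a * c) - exp (-b * c) := by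
  have hderiv : ∀ u ∈ uIcc a b, HasDerivAt (fun v => -exp (-v * c)) (c * exp (-u * c)) u := by
    intro u _
    have hlin : HasDerivAt (fun v => -v * c) (-c) u := by
      simpa using (hasDerivAt_id u).neg.mul_const c
    exact hlin.exp.fun_neg.congr_deriv (by ring)
  rw [← integral_const_mul, ← integral_Ioc_eq_integral_Ioo,
    ← intervalIntegral.integral_of_le hab, intervalIntegral.integral_eq_sub_of_hasDerivAt hderiv
      (Continuous.intervalIntegrable (by fun_prop) _ _)]
  ring

section

variable {H : ℝ}

lemma integrable_exp_neg_mul_sq_mul_abs_rpow_one_sub_two_mul (hH : H < 1) {u : ℝ} (hu : 0 < u) :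
    Integrable fun ξ : ℝ => exp (-u * ξ ^ 2) * |ξ| ^ (1 - 2 * H) :=
  integrable_exp_neg_mul_sq_mul_abs_rpow hu (by linarith)

lemma integral_exp_neg_mul_sq_mul_abs_rpow_one_sub_two_mul (hH : H < 1) {u : ℝ} (hu : 0 < u) :
    ∫ ξ : ℝ, exp (-u * ξ ^ 2) * |ξ| ^ (1 - 2 * H) = Gamma (1 - H) * u ^ (H - 1) := by
  rw [integral_exp_neg_mul_sq_mul_abs_rpow hu (by linarith)]
  ring_nf

lemma integrable_prod_exp_neg_mul_sq_mul_abs_rpow_one_sub_two_mul (hH0 : 0 < H) (hH1 : H < 1)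
    {a b : ℝ} (ha : 0 ≤ a) (hab : a ≤ b) :
    Integrable (uncurry fun u ξ : ℝ => exp (-u * ξ ^ 2) * |ξ| ^ (1 - 2 * H))
      ((volume.restrict (Ioo a b)).prod volume) := by
  refine (integrable_prod_iff (by fun_prop)).2 ⟨?_, ?_⟩
  · filter_upwards [ae_restrict_mem measurableSet_Ioo] with u hu
    exact integrable_exp_neg_mul_sq_mul_abs_rpow_one_sub_two_mul hH1 (ha.trans_lt hu.1)
  · have hmoment : ∀ u ∈ Ioo a b,
        ∫ ξ : ℝ, ‖exp (-u * ξ ^ 2) * |ξ| ^ (1 - 2 * H)‖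
          = Gamma (1 - H) * u ^ (H - 1) := by
      intro u hu
      simp_rw [fun ξ : ℝ =>
        norm_of_nonneg (by positivity : 0 ≤ exp (-u * ξ ^ 2) * |ξ| ^ (1 - 2 * H))]
      exact integral_exp_neg_mul_sq_mul_abs_rpow_one_sub_two_mul hH1 (ha.trans_lt hu.1)
    refine IntegrableOn.congr_fun ?_ (fun u hu => (hmoment u hu).symm) measurableSet_Ioo
    refine (intervalIntegrable_iff_integrableOn_Ioo_of_le hab).1 ?_
    exact (intervalIntegral.intervalIntegrable_rpow' (by linarith)).const_mul _

lemma integral_Ioo_exp_neg_mul_sq_mul_abs_rpow_one_sub_two_mul {a b : ℝ} (hab : a ≤ b)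
    {ξ : ℝ} (hξ : ξ ≠ 0) :
    ∫ u in Ioo a b, exp (-u * ξ ^ 2) * |ξ| ^ (1 - 2 * H)
      = (exp (-a * ξ ^ 2) - exp (-b * ξ ^ 2)) * |ξ| ^ (-1 - 2 * H) := by
  rw [integral_mul_const, ← mul_integral_Ioo_exp_neg_mul _ hab, ← sq_abs,
    show 1 - 2 * H = 2 + (-1 - 2 * H) by ring, rpow_add (abs_pos.2 hξ), rpow_two]
  ring

lemma integrable_exp_neg_mul_sq_sub_mul_abs_rpow_neg_one_sub_two_mul (hH0 : 0 < H) (hH1 : H < 1)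
    {a b : ℝ} (ha : 0 ≤ a) (hab : a ≤ b) :
    Integrable fun ξ : ℝ => (exp (-a * ξ ^ 2) - exp (-b * ξ ^ 2)) * |ξ| ^ (-1 - 2 * H) :=
  (integrable_prod_exp_neg_mul_sq_mul_abs_rpow_one_sub_two_mul hH0 hH1 ha hab).integral_prod_right
    |>.congr <| (volume.ae_ne 0).mono fun _ hξ =>
      integral_Ioo_exp_neg_mul_sq_mul_abs_rpow_one_sub_two_mul hab hξ

lemma integral_exp_neg_mul_sq_sub_mul_abs_rpow_neg_one_sub_two_mul (hH0 : 0 < H) (hH1 : H < 1)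
    {a b : ℝ} (ha : 0 ≤ a) (hab : a ≤ b) :
    ∫ ξ : ℝ, (exp (-a * ξ ^ 2) - exp (-b * ξ ^ 2)) * |ξ| ^ (-1 - 2 * H)
      = Gamma (1 - H) * (b ^ H - a ^ H) / H := by
  rw [← integral_congr_ae ((volume.ae_ne 0).mono fun _ hξ =>
      integral_Ioo_exp_neg_mul_sq_mul_abs_rpow_one_sub_two_mul hab hξ),
    ← integral_integral_swap
      (integrable_prod_exp_neg_mul_sq_mul_abs_rpow_one_sub_two_mul hH0 hH1 ha hab),
    setIntegral_congr_fun measurableSet_Ioo fun u hu =>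
      integral_exp_neg_mul_sq_mul_abs_rpow_one_sub_two_mul hH1 (ha.trans_lt hu.1),
    integral_const_mul, ← integral_Ioc_eq_integral_Ioo, ← intervalIntegral.integral_of_le hab,
    integral_rpow (Or.inl (by linarith)), sub_add_cancel, mul_div_assoc]

lemma integral_sq_exp_neg_mul_sq_sub_mul_abs_rpow_one_sub_two_mul (hH1 : H < 1) {a b : ℝ}
    (ha : 0 < a) (hb : 0 < b) :
    ∫ ξ : ℝ, (exp (-a * ξ ^ 2) - exp (-b * ξ ^ 2)) ^ 2 * |ξ| ^ (1 - 2 * H)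
      = Gamma (1 - H) * ((2 * a) ^ (H - 1) - 2 * (a + b) ^ (H - 1) + (2 * b) ^ (H - 1)) := by
  have hint (u : ℝ) (hu : 0 < u) :=
    integrable_exp_neg_mul_sq_mul_abs_rpow_one_sub_two_mul hH1 hu
  have hexpand : ∀ ξ : ℝ, (exp (-a * ξ ^ 2) - exp (-b * ξ ^ 2)) ^ 2 * |ξ| ^ (1 - 2 * H)
      = exp (-(2 * a) * ξ ^ 2) * |ξ| ^ (1 - 2 * H)
        - 2 * (exp (-(a + b) * ξ ^ 2) * |ξ| ^ (1 - 2 * H))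
        + exp (-(2 * b) * ξ ^ 2) * |ξ| ^ (1 - 2 * H) := fun ξ => by
    rw [sq_exp_neg_mul_sub_exp_neg_mul]
    ring
  have hint2a := hint (2 * a) (by positivity)
  have hintab := (hint (a + b) (by positivity)).const_mul 2
  have hint2a_sub : Integrable fun ξ : ℝ => exp (-(2 * a) * ξ ^ 2) * |ξ| ^ (1 - 2 * H)
      - 2 * (exp (-(a + b) * ξ ^ 2) * |ξ| ^ (1 - 2 * H)) := hint2a.sub hintab
  rw [integral_congr_ae (.of_forall hexpand),
    integral_add hint2a_sub (hint (2 * b) (by positivity)), integral_sub hint2a hintab,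
    integral_const_mul]
  simp only [integral_exp_neg_mul_sq_mul_abs_rpow_one_sub_two_mul hH1 (by positivity : 0 < 2 * a),
    integral_exp_neg_mul_sq_mul_abs_rpow_one_sub_two_mul hH1 (by positivity : 0 < a + b),
    integral_exp_neg_mul_sq_mul_abs_rpow_one_sub_two_mul hH1 (by positivity : 0 < 2 * b)]
  ring

lemma integral_Ioo_integral_sq_exp_sub_mul_abs_rpow_one_sub_two_mul (hH0 : 0 < H) (hH1 : H < 1)
    {s t : ℝ} (hs : 0 ≤ s) (hst : s ≤ t) :
    ∫ r in Ioo 0 s, ∫ ξ : ℝ,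
        (exp (-(t - r) * ξ ^ 2) - exp (-(s - r) * ξ ^ 2)) ^ 2 * |ξ| ^ (1 - 2 * H)
      = Gamma (1 - H) / (2 * H) * ((2 * t) ^ H - (2 * t - 2 * s) ^ H
          - 2 * ((s + t) ^ H - (t - s) ^ H) + (2 * s) ^ H) := by
  have hinner : ∀ r ∈ Ioo 0 s, ∫ ξ : ℝ,
        (exp (-(t - r) * ξ ^ 2) - exp (-(s - r) * ξ ^ 2)) ^ 2 * |ξ| ^ (1 - 2 * H)
      = Gamma (1 - H) * ((2 * t - 2 * r) ^ (H - 1) - 2 * (s + t - 2 * r) ^ (H - 1)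
          + (2 * s - 2 * r) ^ (H - 1)) := by
    intro r hr
    rw [integral_sq_exp_neg_mul_sq_sub_mul_abs_rpow_one_sub_two_mul hH1 (by linarith [hr.2])
        (by linarith [hr.2]),
      show 2 * (t - r) = 2 * t - 2 * r by ring, show t - r + (s - r) = s + t - 2 * r by ring,
      show 2 * (s - r) = 2 * s - 2 * r by ring]
  have hint (k : ℝ) := integrableOn_Ioo_sub_mul_rpow (r := H - 1) (by linarith) two_ne_zero k hs
  have hint_sub : IntegrableOn (fun r : ℝ => (2 * t - 2 * r) ^ (H - 1)
      - 2 * (s + t - 2 * r) ^ (H - 1)) (Ioo 0 s) := (hint _).sub ((hint _).const_mul 2)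
  rw [setIntegral_congr_fun measurableSet_Ioo hinner, integral_const_mul,
    integral_add hint_sub (hint _), integral_sub (hint _) ((hint _).const_mul 2),
    integral_const_mul]
  simp only [integral_Ioo_sub_mul_rpow hH0 two_ne_zero _ hs, mul_zero, sub_zero, sub_self,
    zero_rpow hH0.ne', show s + t - 2 * s = t - s by ring]
  ring

lemma integral_Ioo_integral_exp_mul_abs_rpow_one_sub_two_mul (hH0 : 0 < H) (hH1 : H < 1)
    {s t : ℝ} (hst : s ≤ t) :
    ∫ r in Ioo s t, ∫ ξ : ℝ, exp (-2 * (t - r) * ξ ^ 2) * |ξ| ^ (1 - 2 * H)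
      = Gamma (1 - H) / (2 * H) * (2 * t - 2 * s) ^ H := by
  have hinner : ∀ r ∈ Ioo s t, ∫ ξ : ℝ, exp (-2 * (t - r) * ξ ^ 2) * |ξ| ^ (1 - 2 * H)
      = Gamma (1 - H) * (2 * t - 2 * r) ^ (H - 1) := by
    intro r hr
    rw [show -2 * (t - r) = -(2 * t - 2 * r) by ring,
      integral_exp_neg_mul_sq_mul_abs_rpow_one_sub_two_mul hH1 (by linarith [hr.2])]
  rw [setIntegral_congr_fun measurableSet_Ioo hinner, integral_const_mul,
    integral_Ioo_sub_mul_rpow hH0 two_ne_zero _ hst, sub_self, zero_rpow hH0.ne']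
  ring

lemma integral_sq_exp_sub_mul_abs_rpow_neg_one_sub_two_mul (hH0 : 0 < H) (hH1 : H < 1)
    {s t : ℝ} (hs : 0 ≤ s) (hst : s ≤ t) :
    ∫ ξ : ℝ, (exp (-s * ξ ^ 2) - exp (-t * ξ ^ 2)) ^ 2 * |ξ| ^ (-1 - 2 * H)
      = Gamma (1 - H) / H * (2 * (s + t) ^ H - (2 * s) ^ H - (2 * t) ^ H) := by
  have hexpand : ∀ ξ : ℝ, (exp (-s * ξ ^ 2) - exp (-t * ξ ^ 2)) ^ 2 * |ξ| ^ (-1 - 2 * H)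
      = (exp (-(2 * s) * ξ ^ 2) - exp (-(s + t) * ξ ^ 2)) * |ξ| ^ (-1 - 2 * H)
        - (exp (-(s + t) * ξ ^ 2) - exp (-(2 * t) * ξ ^ 2)) * |ξ| ^ (-1 - 2 * H) := fun ξ => by
    rw [sq_exp_neg_mul_sub_exp_neg_mul]
    ring
  have h2s : 0 ≤ 2 * s := by positivity
  have hst' : 0 ≤ s + t := by linarith
  have h2s_le : 2 * s ≤ s + t := by linarith
  have hst_le : s + t ≤ 2 * t := by linarith
  rw [integral_congr_ae (.of_forall hexpand),
    integral_sub (integrable_exp_neg_mul_sq_sub_mul_abs_rpow_neg_one_sub_two_mul hH0 hH1 h2s h2s_le)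
      (integrable_exp_neg_mul_sq_sub_mul_abs_rpow_neg_one_sub_two_mul hH0 hH1 hst' hst_le),
    integral_exp_neg_mul_sq_sub_mul_abs_rpow_neg_one_sub_two_mul hH0 hH1 h2s h2s_le,
    integral_exp_neg_mul_sq_sub_mul_abs_rpow_neg_one_sub_two_mul hH0 hH1 hst' hst_le]
  ring

end

lemma Gamma_two_mul_div_Gamma {H : ℝ} (hH0 : 0 < H) (hH1 : H < 1) :
    Gamma (2 * H) / Gamma H
      = Gamma (2 * H + 1) * sin (π * H) / (2 * π) * (Gamma (1 - H) / H) := by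
  have hsin : sin (π * H) ≠ 0 :=
    (sin_pos_of_pos_of_lt_pi (by positivity) (by nlinarith [pi_pos])).ne'
  have hGamma : Gamma H ≠ 0 := (Gamma_pos_of_pos hH0).ne'
  have hreflection : Gamma (1 - H) = π / (sin (π * H) * Gamma H) := by
    have h := Gamma_mul_Gamma_one_sub H
    rw [eq_div_iff hsin] at h
    rw [eq_div_iff (mul_ne_zero hsin hGamma)]
    linear_combination h
  rw [Gamma_add_one (by positivity), hreflection]
  generalize sin (π * H) = x at hsin ⊢
  field_simp

theorem stmt12 (H : ℝ) (hH1 : 1 / 4 < H) (hH2 : H < 1 / 2)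
    (s t : ℝ) (hs : 0 ≤ s) (hst : s ≤ t) :
    (Real.Gamma (2 * H + 1) * Real.sin (Real.pi * H) / (2 * Real.pi)) *
        (∫ r in Set.Ioo (0 : ℝ) s, ∫ ξ : ℝ,
          (Real.exp (-(t - r) * ξ ^ 2) - Real.exp (-(s - r) * ξ ^ 2)) ^ 2 *
            |ξ| ^ (1 - 2 * H)) +
      (Real.Gamma (2 * H + 1) * Real.sin (Real.pi * H) / (2 * Real.pi)) *
        (∫ r in Set.Ioo s t, ∫ ξ : ℝ,
          Real.exp (-2 * (t - r) * ξ ^ 2) * |ξ| ^ (1 - 2 * H)) +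
      (Real.Gamma (1 + 2 * H) * Real.sin (Real.pi * H) / (4 * Real.pi)) *
        (∫ ξ : ℝ, (Real.exp (-s * ξ ^ 2) - Real.exp (-t * ξ ^ 2)) ^ 2 *
          |ξ| ^ (-1 - 2 * H)) =
      (Real.Gamma (2 * H) / Real.Gamma H) * (t - s) ^ H := by
  have hH_pos : 0 < H := by linarith
  have hH_lt_one : H < 1 := by linarith
  rw [integral_Ioo_integral_sq_exp_sub_mul_abs_rpow_one_sub_two_mul hH_pos hH_lt_one hs hst,
    integral_Ioo_integral_exp_mul_abs_rpow_one_sub_two_mul hH_pos hH_lt_one hst,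
    integral_sq_exp_sub_mul_abs_rpow_neg_one_sub_two_mul hH_pos hH_lt_one hs hst,
    add_comm 1 (2 * H), Gamma_two_mul_div_Gamma hH_pos hH_lt_one]
  ring
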